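/- Define P_n(x) = S_n(x) − S_{n-2}(x) for n ≥ 1 (with S_{-2}=0), where S_n are normalized Chebyshev polynomials of the second kind. Let z_1 = (x_1^2+x_2^2+1)/(x_1 x_2) and z_n = P_n(z_1). Then for every n ≥ 1, z_n = x_1^{-n} x_2^{-n} ( x_1^{2n} + x_2^{2n} + Σ_{q+r ≤ n-1} (n/(n-q-r)) C(n-1-r, q) C(n-1-q, r) x_1^{2q} x_2^{2r} ), and in particular all the coefficients n/(n-q-r) · C(n-1-r,q) · C(n-1-q,r) are positive integers. -/

import Mathlib

noncomputable section

/-- The ambient field `ℚ(x₁, x₂)` of rational functions in two variables. -/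
abbrev Kfield : Type := FractionRing (MvPolynomial (Fin 2) ℚ)

/-- The first indeterminate `x₁`. -/
def X1 : Kfield := algebraMap (MvPolynomial (Fin 2) ℚ) Kfield (MvPolynomial.X 0)

/-- The second indeterminate `x₂`. -/
def X2 : Kfield := algebraMap (MvPolynomial (Fin 2) ℚ) Kfield (MvPolynomial.X 1)



lemma chooseA (a e : ℕ) : ((a+e+1).choose (a+1) : ℚ) = (a+e+1) * ((a+e).choose a) / (a+1) := by
  have h := Nat.add_one_mul_choose_eq (a+e) a
  have h2 : ((a+e+1) * ((a+e).choose a) : ℕ) = ((a+e+1).choose (a+1)) * (a+1) := by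
    simpa [Nat.succ_eq_add_one] using h
  field_simp
  exact_mod_cast h2.symm

lemma chooseB (a e : ℕ) : ((a+e+1).choose a : ℚ) = (a+e+1) * ((a+e).choose a) / (e+1) := by
  have h := Nat.choose_succ_right_eq (a+e+1) a
  have hs : a+e+1-a = e+1 := by omega
  rw [hs] at h
  have h2 : (((a+e+1).choose a : ℚ)) * (e+1) = ((a+e+1).choose (a+1) : ℚ) * (a+1) := by
    exact_mod_cast congrArg (Nat.cast (R := ℚ)) h.symm
  rw [chooseA] at h2
  field_simp at h2 ⊢
  linarith [h2]

lemma chooseC (a e : ℕ) : ((a+e+2).choose (a+1) : ℚ) = ((a+e+2)*(a+e+1)) * ((a+e).choose a) / ((a+1)*(e+1)) := by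
  have h := chooseA a (e+1)
  have hsh : a+(e+1)+1 = a+e+2 := by omega
  rw [hsh, show a+(e+1) = a+e+1 from by omega] at h
  rw [h, chooseB]
  have ha : ((a:ℚ)+1) ≠ 0 := by positivity
  have he : ((e:ℚ)+1) ≠ 0 := by positivity
  field_simp
  push_cast
  ring

def gam (n q r : ℕ) : ℚ :=
  if q + r + 1 ≤ n then
    (n : ℚ) / ((n - q - r : ℕ) : ℚ) * (((n-1-r).choose q : ℕ) : ℚ) * (((n-1-q).choose r : ℕ) : ℚ)
  else if (q = n ∧ r = 0) ∨ (q = 0 ∧ r = n) then 1 else 0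

lemma gam_zero (n q r : ℕ) (h : n < q + r) : gam n q r = 0 := by
  unfold gam
  rw [if_neg (by omega), if_neg (by omega)]

lemma gam_bd0 (n q r : ℕ) (h1 : q + r = n) (hq : q ≠ 0) (hr : r ≠ 0) : gam n q r = 0 := by
  unfold gam
  rw [if_neg (by omega), if_neg (by omega)]

lemma gam_corner1 (n : ℕ) (hn : 1 ≤ n) : gam n n 0 = 1 := by
  unfold gam
  rw [if_neg (by omega), if_pos (by omega)]

lemma gam_corner2 (n : ℕ) (hn : 1 ≤ n) : gam n 0 n = 1 := by
  unfold gam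
  rw [if_neg (by omega), if_pos (by omega)]

lemma gam_interior (q r e : ℕ) :
    gam (q+r+1+e) q r = ((q:ℚ)+r+1+e)/((e:ℚ)+1) * (((q+e).choose q : ℕ) : ℚ) * (((r+e).choose r : ℕ) : ℚ) := by
  unfold gam
  rw [if_pos (by omega), show q+r+1+e-q-r = e+1 from by omega,
      show q+r+1+e-1-r = q+e from by omega, show q+r+1+e-1-q = r+e from by omega]
  push_cast; ring

set_option maxHeartbeats 1000000 in
lemma gam_key (n q r : ℕ) (hn : 1 ≤ n) :
    gam (n+2) q r = gam (n+1) q r + (if q = 0 then 0 else gam (n+1) (q-1) r)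
      + (if r = 0 then 0 else gam (n+1) q (r-1))
      - (if q = 0 ∨ r = 0 then 0 else gam n (q-1) (r-1)) := by
  rcases Nat.lt_or_ge (n+2) (q+r) with hS3 | hS12
  · -- all zero
    rw [gam_zero (n+2) q r (by omega)]
    rcases Nat.eq_zero_or_pos q with hq | hq
    · subst hq
      rw [gam_zero (n+1) 0 r (by omega)]
      simp only [if_pos rfl, true_or, if_pos]
      rcases Nat.eq_zero_or_pos r with hr | hr
      · omega
      · rw [if_neg (by omega), gam_zero (n+1) 0 (r-1) (by omega)]; ring
    · rcases Nat.eq_zero_or_pos r with hr | hr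
      · subst hr
        rw [gam_zero (n+1) q 0 (by omega), if_neg (by omega), if_pos rfl,
            if_pos (by omega), gam_zero (n+1) (q-1) 0 (by omega)]
        ring
      · rw [gam_zero (n+1) q r (by omega), if_neg (by omega), if_neg (by omega),
            if_neg (by omega), gam_zero (n+1) (q-1) r (by omega),
            gam_zero (n+1) q (r-1) (by omega), gam_zero n (q-1) (r-1) (by omega)]
        ring
  · rcases Nat.lt_or_ge (n+1) (q+r) with hS2 | hS1
    · -- q + r = n + 2
      have hqr : q + r = n + 2 := by omega
      rcases Nat.eq_zero_or_pos q with hq | hq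
      · subst hq
        simp only [if_pos rfl, true_or, if_pos]
        have hr : r = n + 2 := by omega
        subst hr
        rw [gam_corner2 (n+2) (by omega), gam_zero (n+1) 0 (n+2) (by omega),
            if_neg (by omega), show n+2-1 = n+1 from by omega, gam_corner2 (n+1) (by omega)]
        ring
      · rcases Nat.eq_zero_or_pos r with hr | hr
        · subst hr
          have hq2 : q = n + 2 := by omega
          subst hq2
          rw [gam_corner1 (n+2) (by omega), gam_zero (n+1) (n+2) 0 (by omega),
              if_neg (by omega), if_pos rfl, if_pos (by omega),
              show n+2-1 = n+1 from by omega, gam_corner1 (n+1) (by omega)]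
          ring
        · -- q, r ≥ 1
          rw [if_neg (by omega), if_neg (by omega), if_neg (by omega)]
          rw [gam_bd0 (n+2) q r (by omega) (by omega) (by omega),
              gam_zero (n+1) q r (by omega)]
          rcases Nat.eq_or_lt_of_le hq with hq1 | hq1
          · -- q = 1, r = n+1
            have hq2 : q = 1 := hq1.symm
            have hr2 : r = n + 1 := by omega
            subst hq2; subst hr2
            rw [show (1:ℕ)-1 = 0 from rfl, gam_corner2 (n+1) (by omega),
                show n+1-1 = n from by omega, gam_bd0 (n+1) 1 n (by omega) (by omega) (by omega),
                gam_corner2 n (by omega)]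
            ring
          · rcases Nat.eq_or_lt_of_le hr with hr1 | hr1
            · -- r = 1, q = n+1
              have hr2 : r = 1 := hr1.symm
              have hq2 : q = n + 1 := by omega
              subst hr2; subst hq2
              rw [show (1:ℕ)-1 = 0 from rfl, gam_corner1 (n+1) (by omega),
                  show n+1-1 = n from by omega, gam_bd0 (n+1) n 1 (by omega) (by omega) (by omega),
                  gam_corner1 n (by omega)]
              ring
            · -- q, r ≥ 2
              rw [gam_bd0 (n+1) (q-1) r (by omega) (by omega) (by omega),
                  gam_bd0 (n+1) q (r-1) (by omega) (by omega) (by omega),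
                  gam_bd0 n (q-1) (r-1) (by omega) (by omega) (by omega)]
              ring
    · -- q + r ≤ n + 1
      rcases Nat.eq_zero_or_pos q with hq | hq
      · subst hq
        simp only [if_pos rfl, true_or, if_pos]
        rcases Nat.eq_zero_or_pos r with hr | hr
        · subst hr
          rw [if_pos rfl]
          have L := gam_interior 0 0 (n+1)
          rw [show 0+0+1+(n+1) = n+2 from by omega] at L
          have T := gam_interior 0 0 n
          rw [show 0+0+1+n = n+1 from by omega] at T
          rw [L, T]
          simp only [Nat.choose_zero_right, Nat.cast_one]
          have h1 : ((n:ℚ)+1) ≠ 0 := by positivity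
          have h2 : ((n:ℚ)+2) ≠ 0 := by positivity
          push_cast
          field_simp
          ring
        · obtain ⟨b, rfl⟩ : ∃ b, r = b+1 := ⟨r-1, by omega⟩
          rw [if_neg (by omega), show b+1-1 = b from by omega]
          rcases Nat.lt_or_ge b n with hE | hE
          · -- b+1 ≤ n, interior
            obtain ⟨e, rfl⟩ : ∃ e, n = b+1+e := ⟨n-(b+1), by omega⟩
            have L := gam_interior 0 (b+1) (e+1)
            rw [show 0+(b+1)+1+(e+1) = b+1+e+2 from by omega,
                show (b+1)+(e+1) = b+e+2 from by omega,
                show 0+(e+1) = e+1 from by omega] at L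
            have T1 := gam_interior 0 (b+1) e
            rw [show (b+1)+e = b+e+1 from by omega, show 0+e = e from by omega,
                show 0+(b+1)+1+e = b+1+e+1 from by omega] at T1
            have T2 := gam_interior 0 b (e+1)
            rw [show 0+b+1+(e+1) = b+1+e+1 from by omega,
                show b+(e+1) = b+e+1 from by omega, show 0+(e+1) = e+1 from by omega] at T2
            rw [L, T1, T2, chooseA, chooseB, chooseC]
            simp only [Nat.choose_zero_right, Nat.cast_one]
            have h1 : ((b:ℚ)+1) ≠ 0 := by positivity
            have h2 : ((e:ℚ)+1) ≠ 0 := by positivity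
            have h3 : ((e:ℚ)+2) ≠ 0 := by positivity
            push_cast
            field_simp
            ring
          · -- r = n+1
            have hb : b = n := by omega
            subst hb
            have L := gam_interior 0 (b+1) 0
            rw [show 0+(b+1)+1+0 = b+2 from by omega, show (b+1)+0 = b+1 from by omega,
                show 0+0 = 0 from rfl] at L
            have T2 := gam_interior 0 b 0
            rw [show 0+b+1+0 = b+1 from by omega, show b+0 = b from by omega] at T2
            rw [L, T2, gam_corner2 (b+1) (by omega)]
            simp only [Nat.choose_zero_right, Nat.choose_self, Nat.cast_one]
            push_cast
            field_simp
            ring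
      · rcases Nat.eq_zero_or_pos r with hr | hr
        · subst hr
          obtain ⟨a, rfl⟩ : ∃ a, q = a+1 := ⟨q-1, by omega⟩
          rw [if_neg (by omega), if_pos rfl, if_pos (by omega), show a+1-1 = a from by omega]
          rcases Nat.lt_or_ge a n with hE | hE
          · obtain ⟨e, rfl⟩ : ∃ e, n = a+1+e := ⟨n-(a+1), by omega⟩
            have L := gam_interior (a+1) 0 (e+1)
            rw [show (a+1)+0+1+(e+1) = a+1+e+2 from by omega,
                show (a+1)+(e+1) = a+e+2 from by omega,
                show 0+(e+1) = e+1 from by omega] at L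
            have T1 := gam_interior (a+1) 0 e
            rw [show (a+1)+e = a+e+1 from by omega, show 0+e = e from by omega,
                show (a+1)+0+1+e = a+1+e+1 from by omega] at T1
            have T2 := gam_interior a 0 (e+1)
            rw [show a+0+1+(e+1) = a+1+e+1 from by omega,
                show a+(e+1) = a+e+1 from by omega, show 0+(e+1) = e+1 from by omega] at T2
            rw [L, T1, T2, chooseA, chooseB, chooseC]
            simp only [Nat.choose_zero_right, Nat.cast_one]
            have h1 : ((a:ℚ)+1) ≠ 0 := by positivity
            have h2 : ((e:ℚ)+1) ≠ 0 := by positivity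
            have h3 : ((e:ℚ)+2) ≠ 0 := by positivity
            push_cast
            field_simp
            ring
          · have ha : a = n := by omega
            subst ha
            have L := gam_interior (a+1) 0 0
            rw [show (a+1)+0+1+0 = a+2 from by omega, show (a+1)+0 = a+1 from by omega,
                show 0+0 = 0 from rfl] at L
            have T2 := gam_interior a 0 0
            rw [show a+0+1+0 = a+1 from by omega, show a+0 = a from by omega] at T2
            rw [L, T2, gam_corner1 (a+1) (by omega)]
            simp only [Nat.choose_zero_right, Nat.choose_self, Nat.cast_one]
            push_cast
            field_simp
            ring
        · -- q = a+1, r = b+1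
          obtain ⟨a, rfl⟩ : ∃ a, q = a+1 := ⟨q-1, by omega⟩
          obtain ⟨b, rfl⟩ : ∃ b, r = b+1 := ⟨r-1, by omega⟩
          rw [if_neg (by omega), if_neg (by omega), if_neg (by omega),
              show a+1-1 = a from by omega, show b+1-1 = b from by omega]
          rcases Nat.lt_or_ge (a+b+1) n with hE | hE
          · -- q + r ≤ n, main interior case
            obtain ⟨e, rfl⟩ : ∃ e, n = a+b+e+2 := ⟨n-(a+b+2), by omega⟩
            have L := gam_interior (a+1) (b+1) (e+1)
            rw [show (a+1)+(b+1)+1+(e+1) = a+b+e+2+2 from by omega,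
                show (a+1)+(e+1) = a+e+2 from by omega,
                show (b+1)+(e+1) = b+e+2 from by omega] at L
            have T1 := gam_interior (a+1) (b+1) e
            rw [show (a+1)+e = a+e+1 from by omega,
                show (b+1)+e = b+e+1 from by omega,
                show (a+1)+(b+1)+1+e = a+b+e+2+1 from by omega] at T1
            have T2 := gam_interior a (b+1) (e+1)
            rw [show a+(b+1)+1+(e+1) = a+b+e+2+1 from by omega,
                show a+(e+1) = a+e+1 from by omega,
                show (b+1)+(e+1) = b+e+2 from by omega] at T2
            have T3 := gam_interior (a+1) b (e+1)
            rw [show (a+1)+b+1+(e+1) = a+b+e+2+1 from by omega,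
                show (a+1)+(e+1) = a+e+2 from by omega,
                show b+(e+1) = b+e+1 from by omega] at T3
            have T4 := gam_interior a b (e+1)
            rw [show a+b+1+(e+1) = a+b+e+2 from by omega,
                show a+(e+1) = a+e+1 from by omega,
                show b+(e+1) = b+e+1 from by omega] at T4
            rw [L, T1, T2, T3, T4, chooseA, chooseA, chooseB, chooseB, chooseC, chooseC]
            have h1 : ((a:ℚ)+1) ≠ 0 := by positivity
            have h2 : ((b:ℚ)+1) ≠ 0 := by positivity
            have h3 : ((e:ℚ)+1) ≠ 0 := by positivity
            have h4 : ((e:ℚ)+2) ≠ 0 := by positivity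
            push_cast
            field_simp
            ring
          · -- q + r = n + 1
            have hn2 : n = a+b+1 := by omega
            subst hn2
            have L := gam_interior (a+1) (b+1) 0
            rw [show (a+1)+(b+1)+1+0 = a+b+1+2 from by omega,
                show (a+1)+0 = a+1 from by omega, show (b+1)+0 = b+1 from by omega] at L
            have T2 := gam_interior a (b+1) 0
            rw [show a+(b+1)+1+0 = a+b+1+1 from by omega,
                show a+0 = a from by omega, show (b+1)+0 = b+1 from by omega] at T2
            have T3 := gam_interior (a+1) b 0
            rw [show (a+1)+b+1+0 = a+b+1+1 from by omega,
                show (a+1)+0 = a+1 from by omega, show b+0 = b from by omega] at T3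
            have T4 := gam_interior a b 0
            rw [show a+b+1+0 = a+b+1 from by omega,
                show a+0 = a from by omega, show b+0 = b from by omega] at T4
            rw [L, T2, T3, T4, gam_bd0 (a+b+1+1) (a+1) (b+1) (by omega) (by omega) (by omega)]
            simp only [Nat.choose_self, Nat.cast_one]
            push_cast
            field_simp
            ring

def NNt (n K : ℕ) : Kfield :=
  ∑ q ∈ Finset.range K, ∑ r ∈ Finset.range K,
    ((gam n q r : ℚ) : Kfield) * X1^(2*q) * X2^(2*r)

lemma term_zero (n q r : ℕ) (h : n < q + r) :
    ((gam n q r : ℚ) : Kfield) * X1^(2*q) * X2^(2*r) = 0 := by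
  rw [gam_zero n q r h]; simp

lemma NNt_pad (n K K' : ℕ) (hK : n+1 ≤ K) (h' : K ≤ K') : NNt n K = NNt n K' := by
  unfold NNt
  have h1 : ∀ q : ℕ, (∑ r ∈ Finset.range K, ((gam n q r : ℚ) : Kfield) * X1^(2*q) * X2^(2*r))
      = ∑ r ∈ Finset.range K', ((gam n q r : ℚ) : Kfield) * X1^(2*q) * X2^(2*r) := by
    intro q
    apply Finset.sum_subset (Finset.range_subset_range.mpr h')
    intro r _ hr
    rw [Finset.mem_range, not_lt] at hr
    exact term_zero n q r (by omega)
  rw [Finset.sum_congr rfl (fun q _ => h1 q)]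
  apply Finset.sum_subset (Finset.range_subset_range.mpr h')
  intro q _ hq
  rw [Finset.mem_range, not_lt] at hq
  exact Finset.sum_eq_zero (fun r _ => term_zero n q r (by omega))

lemma shift_sum {M : Type} [AddCommMonoid M] (K : ℕ) (F : ℕ → M) :
    (∑ i ∈ Finset.range (K+1), if i = 0 then (0:M) else F i) = ∑ i ∈ Finset.range K, F (i+1) := by
  rw [Finset.sum_range_succ']
  simp

set_option maxHeartbeats 1000000 in
lemma NNt_rec (n : ℕ) (hn : 1 ≤ n) :
    NNt (n+2) (n+3) = (X1^2+X2^2+1) * NNt (n+1) (n+3) - X1^2*X2^2 * NNt n (n+3) := by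
  have hsplit : NNt (n+2) (n+3)
      = NNt (n+1) (n+3)
        + (∑ q ∈ Finset.range (n+3), ∑ r ∈ Finset.range (n+3),
            (((if q = 0 then (0:ℚ) else gam (n+1) (q-1) r) : ℚ) : Kfield) * X1^(2*q) * X2^(2*r))
        + (∑ q ∈ Finset.range (n+3), ∑ r ∈ Finset.range (n+3),
            (((if r = 0 then (0:ℚ) else gam (n+1) q (r-1)) : ℚ) : Kfield) * X1^(2*q) * X2^(2*r))
        - (∑ q ∈ Finset.range (n+3), ∑ r ∈ Finset.range (n+3),
            (((if q = 0 ∨ r = 0 then (0:ℚ) else gam n (q-1) (r-1)) : ℚ) : Kfield) * X1^(2*q) * X2^(2*r)) := by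
    unfold NNt
    have pt : ∀ q r : ℕ, ((gam (n+2) q r : ℚ) : Kfield) * X1^(2*q) * X2^(2*r)
        = ((gam (n+1) q r : ℚ) : Kfield) * X1^(2*q) * X2^(2*r)
          + (((if q = 0 then (0:ℚ) else gam (n+1) (q-1) r) : ℚ) : Kfield) * X1^(2*q) * X2^(2*r)
          + (((if r = 0 then (0:ℚ) else gam (n+1) q (r-1)) : ℚ) : Kfield) * X1^(2*q) * X2^(2*r)
          - (((if q = 0 ∨ r = 0 then (0:ℚ) else gam n (q-1) (r-1)) : ℚ) : Kfield) * X1^(2*q) * X2^(2*r) := by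
      intro q r
      rw [gam_key n q r hn]
      push_cast
      ring
    calc (∑ q ∈ Finset.range (n+3), ∑ r ∈ Finset.range (n+3),
            ((gam (n+2) q r : ℚ) : Kfield) * X1^(2*q) * X2^(2*r))
        = ∑ q ∈ Finset.range (n+3), ∑ r ∈ Finset.range (n+3),
            (((gam (n+1) q r : ℚ) : Kfield) * X1^(2*q) * X2^(2*r)
            + (((if q = 0 then (0:ℚ) else gam (n+1) (q-1) r) : ℚ) : Kfield) * X1^(2*q) * X2^(2*r)
            + (((if r = 0 then (0:ℚ) else gam (n+1) q (r-1)) : ℚ) : Kfield) * X1^(2*q) * X2^(2*r)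
            - (((if q = 0 ∨ r = 0 then (0:ℚ) else gam n (q-1) (r-1)) : ℚ) : Kfield) * X1^(2*q) * X2^(2*r)) :=
          Finset.sum_congr rfl (fun q _ => Finset.sum_congr rfl (fun r _ => pt q r))
      _ = _ := by simp only [Finset.sum_add_distrib, Finset.sum_sub_distrib]
  rw [hsplit]
  have hQ : (∑ q ∈ Finset.range (n+3), ∑ r ∈ Finset.range (n+3),
      (((if q = 0 then (0:ℚ) else gam (n+1) (q-1) r) : ℚ) : Kfield) * X1^(2*q) * X2^(2*r))
      = X1^2 * NNt (n+1) (n+3) := by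
    have e1 : ∀ q, (∑ r ∈ Finset.range (n+3),
        (((if q = 0 then (0:ℚ) else gam (n+1) (q-1) r) : ℚ) : Kfield) * X1^(2*q) * X2^(2*r))
        = if q = 0 then 0 else ∑ r ∈ Finset.range (n+3),
            ((gam (n+1) (q-1) r : ℚ) : Kfield) * X1^(2*q) * X2^(2*r) := by
      intro q
      rcases eq_or_ne q 0 with h | h
      · subst h; simp
      · rw [if_neg h]
        exact Finset.sum_congr rfl (fun r _ => by rw [if_neg h])
    rw [Finset.sum_congr rfl (fun q _ => e1 q), show n+3 = (n+2)+1 from rfl, shift_sum]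
    have e2 : ∀ q, (∑ r ∈ Finset.range (n+2+1),
        ((gam (n+1) (q+1-1) r : ℚ) : Kfield) * X1^(2*(q+1)) * X2^(2*r))
        = X1^2 * ∑ r ∈ Finset.range (n+3),
            ((gam (n+1) q r : ℚ) : Kfield) * X1^(2*q) * X2^(2*r) := by
      intro q
      rw [Finset.mul_sum]
      apply Finset.sum_congr rfl
      intro r _
      rw [show q+1-1 = q from rfl, show 2*(q+1) = 2*q+2 from by ring, pow_add]
      ring
    rw [Finset.sum_congr rfl (fun q _ => e2 q), ← Finset.mul_sum]
    congr 1
    rw [show n+2+1 = n+3 from rfl]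
    unfold NNt
    apply Finset.sum_subset (Finset.range_subset_range.mpr (by omega : n+2 ≤ n+3))
    intro q _ hq
    rw [Finset.mem_range, not_lt] at hq
    exact Finset.sum_eq_zero (fun r _ => term_zero (n+1) q r (by omega))
  have hR : (∑ q ∈ Finset.range (n+3), ∑ r ∈ Finset.range (n+3),
      (((if r = 0 then (0:ℚ) else gam (n+1) q (r-1)) : ℚ) : Kfield) * X1^(2*q) * X2^(2*r))
      = X2^2 * NNt (n+1) (n+3) := by
    have e0 : ∀ q, (∑ r ∈ Finset.range (n+3),
        (((if r = 0 then (0:ℚ) else gam (n+1) q (r-1)) : ℚ) : Kfield) * X1^(2*q) * X2^(2*r))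
        = X2^2 * ∑ r ∈ Finset.range (n+2),
            ((gam (n+1) q r : ℚ) : Kfield) * X1^(2*q) * X2^(2*r) := by
      intro q
      have e1 : ∀ r, (((if r = 0 then (0:ℚ) else gam (n+1) q (r-1)) : ℚ) : Kfield) * X1^(2*q) * X2^(2*r)
          = if r = 0 then 0 else ((gam (n+1) q (r-1) : ℚ) : Kfield) * X1^(2*q) * X2^(2*r) := by
        intro r
        rcases eq_or_ne r 0 with h | h
        · subst h; simp
        · rw [if_neg h, if_neg h]
      rw [Finset.sum_congr rfl (fun r _ => e1 r), show n+3 = (n+2)+1 from rfl, shift_sum,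
          Finset.mul_sum]
      apply Finset.sum_congr rfl
      intro r _
      rw [show r+1-1 = r from rfl, show 2*(r+1) = 2*r+2 from by ring, pow_add]
      ring
    rw [Finset.sum_congr rfl (fun q _ => e0 q), ← Finset.mul_sum]
    congr 1
    unfold NNt
    apply Finset.sum_congr rfl
    intro q _
    apply Finset.sum_subset (Finset.range_subset_range.mpr (by omega : n+2 ≤ n+3))
    intro r _ hr
    rw [Finset.mem_range, not_lt] at hr
    exact term_zero (n+1) q r (by omega)
  have hQR : (∑ q ∈ Finset.range (n+3), ∑ r ∈ Finset.range (n+3),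
      (((if q = 0 ∨ r = 0 then (0:ℚ) else gam n (q-1) (r-1)) : ℚ) : Kfield) * X1^(2*q) * X2^(2*r))
      = X1^2*X2^2 * NNt n (n+3) := by
    have e1 : ∀ q, (∑ r ∈ Finset.range (n+3),
        (((if q = 0 ∨ r = 0 then (0:ℚ) else gam n (q-1) (r-1)) : ℚ) : Kfield) * X1^(2*q) * X2^(2*r))
        = if q = 0 then 0 else ∑ r ∈ Finset.range (n+3),
            (((if r = 0 then (0:ℚ) else gam n (q-1) (r-1)) : ℚ) : Kfield) * X1^(2*q) * X2^(2*r) := by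
      intro q
      rcases eq_or_ne q 0 with h | h
      · subst h; simp
      · rw [if_neg h]
        apply Finset.sum_congr rfl
        intro r _
        congr 2
        simp [h]
    rw [Finset.sum_congr rfl (fun q _ => e1 q), show n+3 = (n+2)+1 from rfl, shift_sum]
    have e2 : ∀ q, (∑ r ∈ Finset.range (n+2+1),
        (((if r = 0 then (0:ℚ) else gam n (q+1-1) (r-1)) : ℚ) : Kfield) * X1^(2*(q+1)) * X2^(2*r))
        = X1^2*X2^2 * ∑ r ∈ Finset.range (n+2),
            ((gam n q r : ℚ) : Kfield) * X1^(2*q) * X2^(2*r) := by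
      intro q
      have e1 : ∀ r, (((if r = 0 then (0:ℚ) else gam n (q+1-1) (r-1)) : ℚ) : Kfield) * X1^(2*(q+1)) * X2^(2*r)
          = if r = 0 then 0 else ((gam n q (r-1) : ℚ) : Kfield) * X1^(2*(q+1)) * X2^(2*r) := by
        intro r
        rcases eq_or_ne r 0 with h | h
        · subst h; simp
        · rw [if_neg h, if_neg h, show q+1-1 = q from rfl]
      rw [Finset.sum_congr rfl (fun r _ => e1 r), shift_sum, Finset.mul_sum]
      apply Finset.sum_congr rfl
      intro r _
      rw [show r+1-1 = r from rfl,
          show 2*(r+1) = 2*r+2 from by ring, show 2*(q+1) = 2*q+2 from by ring,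
          pow_add, pow_add]
      ring
    rw [Finset.sum_congr rfl (fun q _ => e2 q), ← Finset.mul_sum]
    congr 1
    rw [show n+2+1 = n+3 from rfl, ← NNt_pad n (n+2) (n+3) (by omega) (by omega)]
    rfl
  rw [hQ, hR, hQR]
  ring

lemma X1_ne : X1 ≠ 0 := by
  intro h
  exact MvPolynomial.X_ne_zero (R := ℚ) 0 ((IsFractionRing.to_map_eq_zero_iff).mp h)

lemma X2_ne : X2 ≠ 0 := by
  intro h
  exact MvPolynomial.X_ne_zero (R := ℚ) 1 ((IsFractionRing.to_map_eq_zero_iff).mp h)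

lemma X12_ne : X1 * X2 ≠ 0 := mul_ne_zero X1_ne X2_ne

lemma NNt_one : NNt 1 2 = X1^2 + X2^2 + 1 := by
  unfold NNt
  simp only [Finset.sum_range_succ, Finset.sum_range_zero]
  norm_num [gam, Nat.choose]
  ring

lemma NNt_two : NNt 2 3 = X1^4 + X2^4 + 2*X1^2 + 2*X2^2 + 1 := by
  unfold NNt
  simp only [Finset.sum_range_succ, Finset.sum_range_zero]
  norm_num [gam, Nat.choose]
  ring

lemma NNt_tri (n : ℕ) (hn : 1 ≤ n) :
    NNt n (n+1) = X1^(2*n) + X2^(2*n) +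
      ∑ q ∈ Finset.range n, ∑ r ∈ Finset.range (n - q),
        ((n : Kfield) / ((n - q - r : ℕ) : Kfield)) *
          (((n - 1 - r).choose q * ((n - 1 - q).choose r) : ℕ) : Kfield) *
          X1 ^ (2 * q) * X2 ^ (2 * r) := by
  have pt : ∀ q r : ℕ, ((gam n q r : ℚ) : Kfield) * X1^(2*q) * X2^(2*r)
      = (if q + r + 1 ≤ n then
          ((n : Kfield) / ((n - q - r : ℕ) : Kfield)) *
            (((n - 1 - r).choose q * ((n - 1 - q).choose r) : ℕ) : Kfield) *
            X1 ^ (2 * q) * X2 ^ (2 * r) else 0)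
        + (if q = n then (if r = 0 then X1^(2*q) * X2^(2*r) else 0) else 0)
        + (if q = 0 then (if r = n then X1^(2*q) * X2^(2*r) else 0) else 0) := by
    intro q r
    unfold gam
    by_cases h1 : q + r + 1 ≤ n
    · have c2 : (if q = 0 then (if r = n then X1^(2*q) * X2^(2*r) else 0) else 0) = 0 := by
        rcases eq_or_ne q 0 with h | h
        · rw [if_pos h, if_neg (by omega)]
        · rw [if_neg h]
      rw [if_pos h1, if_pos h1, if_neg (by omega : ¬ q = n), c2]
      push_cast
      ring
    · rw [if_neg h1, if_neg h1]
      by_cases h2 : q = n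
      · subst h2
        rw [if_pos rfl, if_neg (by omega : ¬ q = 0)]
        by_cases h3 : r = 0
        · subst h3
          rw [if_pos (Or.inl ⟨rfl, rfl⟩), if_pos rfl]
          push_cast
          ring
        · rw [if_neg (by omega), if_neg h3]
          push_cast
          ring
      · rw [if_neg h2]
        by_cases h4 : q = 0
        · subst h4
          rw [if_pos rfl]
          by_cases h5 : r = n
          · subst h5
            rw [if_pos (Or.inr ⟨rfl, rfl⟩), if_pos rfl]
            push_cast
            ring
          · rw [if_neg (by simp [h2, h5]), if_neg h5]
            push_cast
            ring
        · rw [if_neg (by simp [h2, h4]), if_neg h4]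
          push_cast
          ring
  unfold NNt
  rw [Finset.sum_congr rfl (fun q (_ : q ∈ Finset.range (n+1)) =>
        Finset.sum_congr rfl (fun r (_ : r ∈ Finset.range (n+1)) => pt q r))]
  simp only [Finset.sum_add_distrib]
  have hc1 : (∑ q ∈ Finset.range (n+1), ∑ r ∈ Finset.range (n+1),
      (if q = n then (if r = 0 then X1^(2*q) * X2^(2*r) else 0) else 0)) = X1^(2*n) := by
    have e1 : ∀ q : ℕ, (∑ r ∈ Finset.range (n+1),
        (if q = n then (if r = 0 then X1^(2*q) * X2^(2*r) else 0) else 0))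
        = if q = n then X1^(2*q) else 0 := by
      intro q
      rcases eq_or_ne q n with h | h
      · rw [show (∑ r ∈ Finset.range (n+1),
            (if q = n then (if r = 0 then X1^(2*q) * X2^(2*r) else 0) else 0))
            = ∑ r ∈ Finset.range (n+1), (if r = 0 then X1^(2*q) * X2^(2*r) else 0) from
            Finset.sum_congr rfl (fun r _ => by rw [if_pos h]),
          Finset.sum_ite_eq' (Finset.range (n+1)) 0 (fun r => X1^(2*q) * X2^(2*r)),
          if_pos (Finset.mem_range.mpr (by omega : (0:ℕ) < n+1)), if_pos h]
        norm_num
      · rw [if_neg h]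
        exact Finset.sum_eq_zero (fun r _ => by rw [if_neg h])
    rw [Finset.sum_congr rfl (fun q _ => e1 q),
        Finset.sum_ite_eq' (Finset.range (n+1)) n (fun q => X1^(2*q)),
        if_pos (Finset.mem_range.mpr (by omega))]
  have hc2 : (∑ q ∈ Finset.range (n+1), ∑ r ∈ Finset.range (n+1),
      (if q = 0 then (if r = n then X1^(2*q) * X2^(2*r) else 0) else 0)) = X2^(2*n) := by
    have e1 : ∀ q : ℕ, (∑ r ∈ Finset.range (n+1),
        (if q = 0 then (if r = n then X1^(2*q) * X2^(2*r) else 0) else 0))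
        = if q = 0 then X2^(2*n) else 0 := by
      intro q
      rcases eq_or_ne q 0 with h | h
      · rw [show (∑ r ∈ Finset.range (n+1),
            (if q = 0 then (if r = n then X1^(2*q) * X2^(2*r) else 0) else 0))
            = ∑ r ∈ Finset.range (n+1), (if r = n then X1^(2*q) * X2^(2*r) else 0) from
            Finset.sum_congr rfl (fun r _ => by rw [if_pos h]),
          Finset.sum_ite_eq' (Finset.range (n+1)) n (fun r => X1^(2*q) * X2^(2*r)),
          if_pos (Finset.mem_range.mpr (by omega : n < n+1)), if_pos h, h]
        norm_num
      · rw [if_neg h]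
        exact Finset.sum_eq_zero (fun r _ => by rw [if_neg h])
    rw [Finset.sum_congr rfl (fun q _ => e1 q),
        Finset.sum_ite_eq' (Finset.range (n+1)) 0 (fun q => X2^(2*n)),
        if_pos (Finset.mem_range.mpr (by omega))]
  have htri : (∑ q ∈ Finset.range (n+1), ∑ r ∈ Finset.range (n+1),
      (if q + r + 1 ≤ n then
          ((n : Kfield) / ((n - q - r : ℕ) : Kfield)) *
            (((n - 1 - r).choose q * ((n - 1 - q).choose r) : ℕ) : Kfield) *
            X1 ^ (2 * q) * X2 ^ (2 * r) else 0))
      = ∑ q ∈ Finset.range n, ∑ r ∈ Finset.range (n - q),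
          ((n : Kfield) / ((n - q - r : ℕ) : Kfield)) *
            (((n - 1 - r).choose q * ((n - 1 - q).choose r) : ℕ) : Kfield) *
            X1 ^ (2 * q) * X2 ^ (2 * r) := by
    symm
    have step1 : ∀ q : ℕ, q < n →
        (∑ r ∈ Finset.range (n - q),
          ((n : Kfield) / ((n - q - r : ℕ) : Kfield)) *
            (((n - 1 - r).choose q * ((n - 1 - q).choose r) : ℕ) : Kfield) *
            X1 ^ (2 * q) * X2 ^ (2 * r))
        = ∑ r ∈ Finset.range (n+1),
            (if q + r + 1 ≤ n then
              ((n : Kfield) / ((n - q - r : ℕ) : Kfield)) *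
                (((n - 1 - r).choose q * ((n - 1 - q).choose r) : ℕ) : Kfield) *
                X1 ^ (2 * q) * X2 ^ (2 * r) else 0) := by
      intro q hq
      rw [show (∑ r ∈ Finset.range (n - q),
          ((n : Kfield) / ((n - q - r : ℕ) : Kfield)) *
            (((n - 1 - r).choose q * ((n - 1 - q).choose r) : ℕ) : Kfield) *
            X1 ^ (2 * q) * X2 ^ (2 * r))
          = ∑ r ∈ Finset.range (n - q),
            (if q + r + 1 ≤ n then
              ((n : Kfield) / ((n - q - r : ℕ) : Kfield)) *
                (((n - 1 - r).choose q * ((n - 1 - q).choose r) : ℕ) : Kfield) *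
                X1 ^ (2 * q) * X2 ^ (2 * r) else 0) from
          Finset.sum_congr rfl (fun r hr => by
            rw [Finset.mem_range] at hr
            rw [if_pos (by omega)])]
      apply Finset.sum_subset (Finset.range_subset_range.mpr (by omega))
      intro r _ hr
      rw [Finset.mem_range, not_lt] at hr
      rw [if_neg (by omega)]
    rw [Finset.sum_congr rfl (fun q (hq : q ∈ Finset.range n) =>
          step1 q (Finset.mem_range.mp hq))]
    apply Finset.sum_subset (Finset.range_subset_range.mpr (by omega))
    intro q _ hq
    rw [Finset.mem_range, not_lt] at hq
    exact Finset.sum_eq_zero (fun r _ => by rw [if_neg (by omega)])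
  rw [hc1, hc2, htri]
  ring

lemma intpart (n q r : ℕ) (h : q + r + 1 ≤ n) :
    ∃ m : ℕ, 0 < m ∧ (m : ℚ) = (n : ℚ) / ((n - q - r : ℕ) : ℚ) *
      ((n - 1 - r).choose q) * ((n - 1 - q).choose r) := by
  rcases Nat.eq_zero_or_pos q with hq | hq
  · subst hq
    rcases Nat.eq_zero_or_pos r with hr | hr
    · subst hr
      refine ⟨1, by omega, ?_⟩
      obtain ⟨e, rfl⟩ : ∃ e, n = e + 1 := ⟨n - 1, by omega⟩
      rw [show e+1-0-0 = e+1 from by omega, show e+1-1-0 = e from by omega]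
      rw [Nat.choose_zero_right]
      push_cast
      rw [div_self (by positivity)]
      norm_num
    · obtain ⟨b, rfl⟩ : ∃ b, r = b + 1 := ⟨r - 1, by omega⟩
      obtain ⟨e, rfl⟩ : ∃ e, n = b + e + 2 := ⟨n - b - 2, by omega⟩
      refine ⟨(b+e+1).choose (b+1) + (b+e+1).choose b,
        lt_of_lt_of_le (Nat.choose_pos (by omega : b+1 ≤ b+e+1)) (Nat.le_add_right _ _), ?_⟩
      rw [show b+e+2-0-(b+1) = e+1 from by omega, show b+e+2-1-(b+1) = e from by omega,
          show b+e+2-1-0 = b+e+1 from by omega, Nat.choose_zero_right]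
      push_cast
      rw [chooseA, chooseB]
      have h1 : ((b:ℚ)+1) ≠ 0 := by positivity
      have h2 : ((e:ℚ)+1) ≠ 0 := by positivity
      push_cast
      field_simp
      ring
  · obtain ⟨a, rfl⟩ : ∃ a, q = a + 1 := ⟨q - 1, by omega⟩
    rcases Nat.eq_zero_or_pos r with hr | hr
    · subst hr
      obtain ⟨e, rfl⟩ : ∃ e, n = a + e + 2 := ⟨n - a - 2, by omega⟩
      refine ⟨(a+e+1).choose (a+1) + (a+e+1).choose a,
        lt_of_lt_of_le (Nat.choose_pos (by omega : a+1 ≤ a+e+1)) (Nat.le_add_right _ _), ?_⟩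
      rw [show a+e+2-(a+1)-0 = e+1 from by omega, show a+e+2-1-0 = a+e+1 from by omega,
          show a+e+2-1-(a+1) = e from by omega, Nat.choose_zero_right]
      push_cast
      rw [chooseA, chooseB]
      have h1 : ((a:ℚ)+1) ≠ 0 := by positivity
      have h2 : ((e:ℚ)+1) ≠ 0 := by positivity
      push_cast
      field_simp
      ring
    · obtain ⟨b, rfl⟩ : ∃ b, r = b + 1 := ⟨r - 1, by omega⟩
      obtain ⟨e, rfl⟩ : ∃ e, n = a + b + e + 3 := ⟨n - a - b - 3, by omega⟩
      refine ⟨(a+e+1).choose (a+1) * ((b+e+1).choose (b+1))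
        + (a+e+1).choose a * ((b+e+1).choose (b+1))
        + (a+e+1).choose (a+1) * ((b+e+1).choose b),
        lt_of_lt_of_le (Nat.mul_pos (Nat.choose_pos (by omega : a+1 ≤ a+e+1))
            (Nat.choose_pos (by omega : b+1 ≤ b+e+1)))
          (le_trans (Nat.le_add_right _ _) (Nat.le_add_right _ _)), ?_⟩
      rw [show a+b+e+3-(a+1)-(b+1) = e+1 from by omega,
          show a+b+e+3-1-(b+1) = a+e+1 from by omega,
          show a+b+e+3-1-(a+1) = b+e+1 from by omega]
      push_cast
      simp only [chooseA, chooseB]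
      have h1 : ((a:ℚ)+1) ≠ 0 := by positivity
      have h2 : ((b:ℚ)+1) ≠ 0 := by positivity
      have h3 : ((e:ℚ)+1) ≠ 0 := by positivity
      push_cast
      field_simp
      ring

/-- Let `s_n = S_n(z₁)` (Chebyshev recursion at `z₁ = (x₁²+x₂²+1)/(x₁x₂)`) and
`z_n = P_n(z₁) = s_n − s_{n-2}` for `n ≥ 2`, with `z₁ = s₁`. Then for every `n ≥ 1`,
`z_n = x₁^{-n} x₂^{-n} (x₁^{2n} + x₂^{2n} + ∑_{q+r ≤ n-1} (n/(n-q-r)) C(n-1-r,q) C(n-1-q,r)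
x₁^{2q} x₂^{2r})`, and the coefficients `(n/(n-q-r)) C(n-1-r,q) C(n-1-q,r)` are positive
integers. -/
theorem stmt11 (z1 : Kfield) (hz1 : z1 = (X1 ^ 2 + X2 ^ 2 + 1) / (X1 * X2))
    (s : ℕ → Kfield) (h0 : s 0 = 1) (h1 : s 1 = z1)
    (hrec : ∀ n : ℕ, s (n + 2) = z1 * s (n + 1) - s n)
    (z : ℕ → Kfield) (hzdef1 : z 1 = s 1)
    (hzdef : ∀ n : ℕ, 2 ≤ n → z n = s n - s (n - 2)) :
    ∀ n : ℕ, 1 ≤ n →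
      (z n = X1 ^ (-(n : ℤ)) * X2 ^ (-(n : ℤ)) *
        (X1 ^ (2 * n) + X2 ^ (2 * n) +
          ∑ q ∈ Finset.range n, ∑ r ∈ Finset.range (n - q),
            ((n : Kfield) / ((n - q - r : ℕ) : Kfield)) *
              (((n - 1 - r).choose q * ((n - 1 - q).choose r) : ℕ) : Kfield) *
              X1 ^ (2 * q) * X2 ^ (2 * r))) ∧
      ∀ q r : ℕ, q + r ≤ n - 1 → ∃ m : ℕ, 0 < m ∧
        (m : ℚ) = (n : ℚ) / ((n - q - r : ℕ) : ℚ) *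
          ((n - 1 - r).choose q) * ((n - 1 - q).choose r) := by
  intro n hn
  have hz1' : z1 * (X1 * X2) = X1^2 + X2^2 + 1 := by
    rw [hz1]
    exact div_mul_cancel₀ _ X12_ne
  have zrec : ∀ m : ℕ, z (m+3) = z1 * z (m+2) - z (m+1) := by
    intro m
    rcases m with _ | k
    · show z 3 = z1 * z 2 - z 1
      have e3 := hzdef 3 (by norm_num)
      have e2 := hzdef 2 (by norm_num)
      norm_num at e3 e2
      have r1 := hrec 1
      rw [show (1:ℕ)+2 = 3 from rfl] at r1
      rw [e3, e2, hzdef1, r1, h0, h1]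
      ring
    · show z (k+4) = z1 * z (k+3) - z (k+2)
      have e4 := hzdef (k+4) (by omega)
      have e3 := hzdef (k+3) (by omega)
      have e2 := hzdef (k+2) (by omega)
      rw [show k+4-2 = k+2 from by omega] at e4
      rw [show k+3-2 = k+1 from by omega] at e3
      rw [show k+2-2 = k from by omega] at e2
      have r1 := hrec (k+2)
      have r0 := hrec k
      rw [show k+2+2 = k+4 from rfl, show k+2+1 = k+3 from rfl] at r1
      rw [e4, e3, e2, r1, r0]
      ring
  have base1 : (X1*X2)^1 * z 1 = NNt 1 2 := by
    rw [hzdef1, h1, NNt_one, pow_one, ← hz1']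
    ring
  have base2 : (X1*X2)^2 * z 2 = NNt 2 3 := by
    have e2 := hzdef 2 (by norm_num)
    norm_num at e2
    have r0 := hrec 0
    rw [show (0:ℕ)+2 = 2 from rfl, show (0:ℕ)+1 = 1 from rfl] at r0
    rw [e2, r0, h0, h1, NNt_two]
    have hx : (X1*X2)^2 * (z1*z1 - 1 - 1) = (z1*(X1*X2))*(z1*(X1*X2)) - 2*(X1*X2)^2 := by
      ring
    rw [hx, hz1']
    ring
  have key : ∀ m : ℕ, ((X1*X2)^(m+1) * z (m+1) = NNt (m+1) (m+2))
      ∧ ((X1*X2)^(m+2) * z (m+2) = NNt (m+2) (m+3)) := by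
    intro m
    induction m with
    | zero => exact ⟨base1, base2⟩
    | succ k ih =>
      refine ⟨ih.2, ?_⟩
      rw [show k+1+2 = k+3 from rfl, show k+1+3 = k+4 from rfl]
      rw [zrec k]
      have hpad2 : NNt (k+2) (k+3) = NNt (k+2) (k+4) :=
        NNt_pad (k+2) (k+3) (k+4) (by omega) (by omega)
      have hpad1 : NNt (k+1) (k+2) = NNt (k+1) (k+4) :=
        NNt_pad (k+1) (k+2) (k+4) (by omega) (by omega)
      have hr := NNt_rec (k+1) (by omega)
      rw [show k+1+2 = k+3 from rfl, show k+1+3 = k+4 from rfl,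
          show k+1+1 = k+2 from rfl] at hr
      calc (X1*X2)^(k+3) * (z1 * z (k+2) - z (k+1))
          = (z1*(X1*X2)) * ((X1*X2)^(k+2) * z (k+2))
            - X1^2*X2^2 * ((X1*X2)^(k+1) * z (k+1)) := by ring
        _ = (X1^2+X2^2+1) * NNt (k+2) (k+4) - X1^2*X2^2 * NNt (k+1) (k+4) := by
            rw [hz1', ih.1, ih.2, hpad2, hpad1]
        _ = NNt (k+3) (k+4) := hr.symm
  obtain ⟨m, rfl⟩ : ∃ m, n = m+1 := ⟨n-1, by omega⟩
  constructor
  · have hmain := (key m).1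
    have htri := NNt_tri (m+1) (by omega)
    rw [show m+1+1 = m+2 from rfl] at htri
    rw [htri] at hmain
    rw [zpow_neg, zpow_neg, zpow_natCast, zpow_natCast, ← hmain]
    have hx1 : X1 ^ (m+1) ≠ 0 := pow_ne_zero _ X1_ne
    have hx2 : X2 ^ (m+1) ≠ 0 := pow_ne_zero _ X2_ne
    rw [mul_pow]
    field_simp
  · intro q r hqr
    exact intpart (m+1) q r (by omega)
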